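/- Let h : (0,∞)² → ℝ be continuous and piecewise generalized polynomial with pieces A_1, …, A_l corresponding to distinct generalized polynomial functions g_1, …, g_l. Suppose E ⊆ (0,∞)² is connected and for each (x,y) ∈ E the l values g_1(x,y), …, g_l(x,y) are pairwise distinct. Then there exists i ∈ {1,…,l} such that E ⊆ A_i° (interior in (0,∞)²), so in particular h = g_i throughout E; and this index i is unique when E is nonempty. -/

import Mathlib

open Set

noncomputable section

/-- The open positive quadrant `(0,∞)²`, as a subtype of `ℝ × ℝ`. -/
abbrev PQ : Type := {p : ℝ × ℝ // 0 < p.1 ∧ 0 < p.2}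

/-- A generalized polynomial function (signomial) of two variables: a finite sum
`∑ cᵢ x^{αᵢ₁} y^{αᵢ₂}` with nonzero real coefficients and distinct real exponent pairs. -/
def IsGenPoly (a : PQ → ℝ) : Prop :=
  ∃ (m : ℕ) (c : Fin m → ℝ) (α : Fin m → ℝ × ℝ),
    (∀ i, c i ≠ 0) ∧ Function.Injective α ∧
    ∀ p : PQ, a p = ∑ i, c i * p.1.1 ^ (α i).1 * p.1.2 ^ (α i).2

/-- A basic generalized semialgebraic (semisignomial) subset of `(0,∞)²`. -/
def IsBasicGSA (S : Set PQ) : Prop :=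
  ∃ (f : PQ → ℝ) (K : ℕ) (g : Fin K → PQ → ℝ),
    IsGenPoly f ∧ (∀ k, IsGenPoly (g k)) ∧
    S = {p : PQ | f p = 0 ∧ ∀ k, 0 < g k p}

/-- A generalized semialgebraic set: a finite union of basic ones. -/
def IsGSA (S : Set PQ) : Prop :=
  ∃ (J : ℕ) (T : Fin J → Set PQ), (∀ j, IsBasicGSA (T j)) ∧ S = ⋃ j, T j

/-- `h` is piecewise generalized polynomial: there are finitely many *distinct*
generalized polynomial functions `g i` whose agreement sets with `h` are
generalized semialgebraic and cover `(0,∞)²`. -/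
def IsPiecewiseGenPoly (h : PQ → ℝ) : Prop :=
  ∃ (l : ℕ) (g : Fin l → PQ → ℝ),
    (∀ i, IsGenPoly (g i)) ∧ Function.Injective g ∧
    (∀ i, IsGSA {p : PQ | h p = g i p}) ∧
    ∀ p : PQ, ∃ i, h p = g i p

/-- `h` is a pointwise sup of infs of finitely many generalized polynomial functions. -/
def IsSupInf (h : PQ → ℝ) : Prop :=
  ∃ (J : ℕ) (K : Fin (J + 1) → ℕ)
    (f : (j : Fin (J + 1)) → Fin (K j + 1) → PQ → ℝ),
    (∀ j k, IsGenPoly (f j k)) ∧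
    ∀ p : PQ, h p = ⨆ j, ⨅ k, f j k p

/-
Each piece `A i = {h = g i}` is closed, and at a point of `E` only one piece contains it, since
`h p = g i p = g j p` would contradict the distinctness of the values. A point lying in exactly
one member of a finite closed cover lies in the interior of that member, so the interiors of the
pieces form an open cover of `E` whose members are pairwise disjoint on `E`; a preconnected set
cannot meet two of them.
-/

lemma IsGenPoly.continuous {a : PQ → ℝ} (ha : IsGenPoly a) : Continuous a := by
  obtain ⟨m, c, α, -, -, hrep⟩ := ha
  have hx : Continuous fun p : PQ => p.1.1 := continuous_fst.comp continuous_subtype_val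
  have hy : Continuous fun p : PQ => p.1.2 := continuous_snd.comp continuous_subtype_val
  refine (continuous_finsetSum _ fun i _ => ?_).congr fun p => (hrep p).symm
  exact (continuous_const.mul (hx.rpow_const fun p => Or.inl p.2.1.ne')).mul
    (hy.rpow_const fun p => Or.inl p.2.2.ne')

section

variable {X ι : Type*} [TopologicalSpace X]

lemma mem_interior_of_forall_notMem_of_isClosed [Finite ι] {A : ι → Set X}
    (hA : ∀ i, IsClosed (A i)) (hcover : ∀ x, ∃ i, x ∈ A i) {i : ι} {x : X}
    (hx : ∀ j, j ≠ i → x ∉ A j) : x ∈ interior (A i) := by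
  refine mem_interior.2 ⟨(⋃ j ∈ ({i} : Set ι)ᶜ, A j)ᶜ, fun y hy => ?_, ?_, ?_⟩
  · obtain ⟨j, hj⟩ := hcover y
    by_contra hyi
    exact hy (mem_biUnion (mem_compl_singleton_iff.2 fun hji => hyi (hji ▸ hj)) hj)
  · exact ((Set.toFinite _).isClosed_biUnion fun j _ => hA j).isOpen_compl
  · simp only [mem_compl_iff, mem_iUnion, not_exists]
    exact fun j hj => hx j hj

lemma IsPreconnected.exists_subset_of_pairwise_disjoint_isOpen {s : Set X}
    (hs : IsPreconnected s) (hne : s.Nonempty) {U : ι → Set X} (hU : ∀ i, IsOpen (U i))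
    (hcover : s ⊆ ⋃ i, U i) (hdisj : Pairwise fun i j => Disjoint (s ∩ U i) (s ∩ U j)) :
    ∃ i, s ⊆ U i := by
  obtain ⟨x, hxs⟩ := hne
  obtain ⟨i, hxi⟩ := mem_iUnion.1 (hcover hxs)
  set V := ⋃ j ∈ ({i} : Set ι)ᶜ, U j
  have hsUV : s ⊆ U i ∪ V := fun y hy => by
    obtain ⟨j, hyj⟩ := mem_iUnion.1 (hcover hy)
    rcases eq_or_ne j i with rfl | hji
    · exact Or.inl hyj
    · exact Or.inr (mem_biUnion (mem_compl_singleton_iff.2 hji) hyj)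
  have hsV : ¬ (s ∩ V).Nonempty := fun hsV => by
    obtain ⟨z, hzs, hzi, hzV⟩ :=
      hs (U i) V (hU i) (isOpen_biUnion fun j _ => hU j) hsUV ⟨x, hxs, hxi⟩ hsV
    obtain ⟨j, hji, hzj⟩ := mem_iUnion₂.1 hzV
    exact (hdisj (mem_compl_singleton_iff.1 hji).symm).notMem_of_mem_left ⟨hzs, hzi⟩ ⟨hzs, hzj⟩
  exact ⟨i, fun y hy => (hsUV hy).resolve_right fun hyV => hsV ⟨y, hy, hyV⟩⟩

end

theorem connected_subset_single_piece_general (h : PQ → ℝ) (hc : Continuous h)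
    (l : ℕ) (g : Fin l → PQ → ℝ)
    (hg : ∀ i, IsGenPoly (g i))
    (A : Fin l → Set PQ) (hA : ∀ i, A i = {p : PQ | h p = g i p})
    (hcover : ∀ p : PQ, ∃ i, p ∈ A i)
    (E : Set PQ) (hE : IsPreconnected E)
    (hdist : ∀ p ∈ E, ∀ i j : Fin l, i ≠ j → g i p ≠ g j p) :
    (∃ i : Fin l, E ⊆ interior (A i) ∧ ∀ p ∈ E, h p = g i p) ∧
    (E.Nonempty → ∃! i : Fin l, E ⊆ interior (A i)) := by
  have hclosed i : IsClosed (A i) := hA i ▸ isClosed_eq hc (hg i).continuous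
  have hmem {i p} : p ∈ interior (A i) → h p = g i p := fun hp => by
    simpa [hA i] using interior_subset hp
  have hsingle {p} (hp : p ∈ E) {i j} (hi : p ∈ A i) (hj : p ∈ A j) : i = j := by
    by_contra hij
    exact hdist p hp i j hij (by rw [hA] at hi hj; exact hi.symm.trans hj)
  have hint : E ⊆ ⋃ i, interior (A i) := fun p hp => by
    obtain ⟨i, hi⟩ := hcover p
    exact mem_iUnion.2 ⟨i, mem_interior_of_forall_notMem_of_isClosed hclosed hcover
      fun j hji hj => hji (hsingle hp hj hi)⟩
  have hdisj : Pairwise fun i j => Disjoint (E ∩ interior (A i)) (E ∩ interior (A j)) :=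
    fun i j hij =>
      Set.disjoint_left.2 fun p ⟨hp, hpi⟩ ⟨_, hpj⟩ =>
        hij (hsingle hp (interior_subset hpi) (interior_subset hpj))
  have hpiece : ∃ i, E ⊆ interior (A i) := by
    rcases E.eq_empty_or_nonempty with rfl | hne
    · exact (hcover ⟨(1, 1), one_pos, one_pos⟩).imp fun _ _ => empty_subset _
    · exact hE.exists_subset_of_pairwise_disjoint_isOpen hne (fun _ => isOpen_interior) hint hdisj
  obtain ⟨i, hi⟩ := hpiece
  refine ⟨⟨i, hi, fun p hp => hmem (hi hp)⟩, fun ⟨p, hp⟩ => ⟨i, hi, fun j hj => ?_⟩⟩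
  exact hsingle hp (interior_subset (hj hp)) (interior_subset (hi hp))

/-- If `h` is continuous piecewise generalized polynomial and `E` is a connected
subset of `(0,∞)²` on which the values `g 1, …, g l` are pairwise distinct at
every point, then `E` is contained in the interior of a single piece (so `h`
agrees with that `g i` on `E`); the index is unique if `E` is nonempty. -/
theorem connected_subset_single_piece (h : PQ → ℝ) (hc : Continuous h)
    (l : ℕ) (g : Fin l → PQ → ℝ)
    (hg : ∀ i, IsGenPoly (g i)) (hginj : Function.Injective g)
    (A : Fin l → Set PQ) (hA : ∀ i, A i = {p : PQ | h p = g i p})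
    (hGSA : ∀ i, IsGSA (A i)) (hcover : ∀ p : PQ, ∃ i, p ∈ A i)
    (E : Set PQ) (hE : IsPreconnected E)
    (hdist : ∀ p ∈ E, ∀ i j : Fin l, i ≠ j → g i p ≠ g j p) :
    (∃ i : Fin l, E ⊆ interior (A i) ∧ ∀ p ∈ E, h p = g i p) ∧
    (E.Nonempty → ∃! i : Fin l, E ⊆ interior (A i)) :=
  connected_subset_single_piece_general h hc l g hg A hA hcover E hE hdist
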